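/- If T is any (unrooted) tree, then χ_D(T) ≤ D(T) + 1. -/

import Mathlib

open SimpleGraph

noncomputable section

def ecc {V : Type*} [Fintype V] (G : SimpleGraph V) (v : V) : ℕ :=
  Finset.univ.sup fun u => G.dist u v

def graphCenter {V : Type*} [Fintype V] (G : SimpleGraph V) : Set V :=
  {v | ∀ u, ecc G v ≤ ecc G u}

def desc {V : Type*} (G : SimpleGraph V) (x v : V) : Set V :=
  {u | G.dist u x = G.dist u v + G.dist v x}

lemma self_mem_desc {V : Type*} (G : SimpleGraph V) (x v : V) : v ∈ desc G x v := by
  simp [desc]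

def Distinguishes {V α : Type*} (G : SimpleGraph V) (r : V) (φ : V → α) : Prop :=
  ∀ σ : G ≃g G, σ r = r → (∀ w, φ (σ w) = φ w) → ∀ w, σ w = w

def DistinguishesU {V α : Type*} (G : SimpleGraph V) (φ : V → α) : Prop :=
  ∀ σ : G ≃g G, (∀ w, φ (σ w) = φ w) → ∀ w, σ w = w

def RootedIso {V W : Type*} (G : SimpleGraph V) (H : SimpleGraph W) (r : V) (s : W) : Prop :=
  ∃ π : G ≃g H, π r = s

def ColEquiv {V W α : Type*} (G : SimpleGraph V) (H : SimpleGraph W) (r : V) (s : W)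
    (φ : V → α) (ψ : W → α) : Prop :=
  ∃ π : G ≃g H, π r = s ∧ ∀ w, φ w = ψ (π w)

def IsProper {V α : Type*} (G : SimpleGraph V) (φ : V → α) : Prop :=
  ∀ a b, G.Adj a b → φ a ≠ φ b

def DCount {V : Type*} (G : SimpleGraph V) (r : V) (k : ℕ) : ℕ :=
  Nat.card (Quot fun φ ψ : {f : V → Fin k // Distinguishes G r f} =>
    ∃ σ : G ≃g G, σ r = r ∧ ∀ w, φ.1 w = ψ.1 (σ w))

def DCountL {V : Type*} (G : SimpleGraph V) (r : V) (L : V → Finset ℕ) : ℕ :=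
  Nat.card (Quot fun φ ψ : {f : V → ℕ // (∀ v, f v ∈ L v) ∧ Distinguishes G r f} =>
    ∃ σ : G ≃g G, σ r = r ∧ ∀ w, φ.1 w = ψ.1 (σ w))

def DChiCount {V : Type*} (G : SimpleGraph V) (r : V) (k : ℕ) : ℕ :=
  Nat.card (Quot fun φ ψ : {f : V → Fin k // IsProper G f ∧ Distinguishes G r f} =>
    ∃ σ : G ≃g G, σ r = r ∧ ∀ w, φ.1 w = ψ.1 (σ w))

def DChiCountI {V : Type*} (G : SimpleGraph V) (r : V) (k : ℕ) (i : Fin k) : ℕ :=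
  Nat.card (Quot fun φ ψ : {f : V → Fin k // IsProper G f ∧ Distinguishes G r f ∧ f r = i} =>
    ∃ σ : G ≃g G, σ r = r ∧ ∀ w, φ.1 w = ψ.1 (σ w))

def DChiCountLI {V : Type*} (G : SimpleGraph V) (r : V) (L : V → Finset ℕ) (i : ℕ) : ℕ :=
  Nat.card (Quot fun φ ψ : {f : V → ℕ // (∀ v, f v ∈ L v) ∧ IsProper G f ∧ Distinguishes G r f ∧ f r = i} =>
    ∃ σ : G ≃g G, σ r = r ∧ ∀ w, φ.1 w = ψ.1 (σ w))

def DNum {V : Type*} (G : SimpleGraph V) (r : V) : ℕ :=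
  sInf {k | ∃ φ : V → Fin k, Distinguishes G r φ}

def DListNum {V : Type*} (G : SimpleGraph V) (r : V) : ℕ :=
  sInf {k | ∀ L : V → Finset ℕ, (∀ v, (L v).card = k) →
    ∃ φ : V → ℕ, (∀ v, φ v ∈ L v) ∧ Distinguishes G r φ}

def DNumU {V : Type*} (G : SimpleGraph V) : ℕ :=
  sInf {k | ∃ φ : V → Fin k, DistinguishesU G φ}

def DListNumU {V : Type*} (G : SimpleGraph V) : ℕ :=
  sInf {k | ∀ L : V → Finset ℕ, (∀ v, (L v).card = k) →
    ∃ φ : V → ℕ, (∀ v, φ v ∈ L v) ∧ DistinguishesU G φ}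

def chiD {V : Type*} (G : SimpleGraph V) (r : V) : ℕ :=
  sInf {k | ∃ φ : V → Fin k, IsProper G φ ∧ Distinguishes G r φ}

def chiDL {V : Type*} (G : SimpleGraph V) (r : V) : ℕ :=
  sInf {k | ∀ L : V → Finset ℕ, (∀ v, (L v).card = k) →
    ∃ φ : V → ℕ, (∀ v, φ v ∈ L v) ∧ IsProper G φ ∧ Distinguishes G r φ}

def chiDU {V : Type*} (G : SimpleGraph V) : ℕ :=
  sInf {k | ∃ φ : V → Fin k, IsProper G φ ∧ DistinguishesU G φ}

def chiDLU {V : Type*} (G : SimpleGraph V) : ℕ :=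
  sInf {k | ∀ L : V → Finset ℕ, (∀ v, (L v).card = k) →
    ∃ φ : V → ℕ, (∀ v, φ v ∈ L v) ∧ IsProper G φ ∧ DistinguishesU G φ}

def subdiv {V : Type*} (G : SimpleGraph V) (u v : V) : SimpleGraph (V ⊕ Unit) :=
  SimpleGraph.fromRel fun a b =>
    match a, b with
    | Sum.inl a, Sum.inl b => G.Adj a b ∧ ¬(a = u ∧ b = v) ∧ ¬(a = v ∧ b = u)
    | Sum.inl a, Sum.inr _ => a = u ∨ a = v
    | Sum.inr _, _ => False

def childOf {V : Type*} (G : SimpleGraph V) (r v u : V) : Prop :=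
  G.Adj v u ∧ G.dist u r = G.dist v r + 1

/-!
Root the tree at a central vertex `x` and take a distinguishing colouring `c` with `D(T)` colours.
Give `x` a new colour and, walking away from `x`, let every other vertex keep its `c`-colour unless
its parent already carries that colour, in which case it takes the new colour. Parent and child
always differ, so the colouring is proper, and `c` is recovered from it together with the parent
map. An automorphism preserving the new colouring maps `x` to a central vertex, which is `x` or a
neighbour of `x`; properness rules out the latter. Fixing `x`, it commutes with the parent map,
hence preserves `c`, hence is the identity.
-/

namespace SimpleGraph

variable {V W : Type*} {G : SimpleGraph V} {G' : SimpleGraph W}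

lemma Hom.edist_map_le (f : G →g G') (u v : V) : G'.edist (f u) (f v) ≤ G.edist u v :=
  le_iInf fun p => by simpa using edist_le (p.map f)

lemma Iso.edist_map (σ : G ≃g G') (u v : V) : G'.edist (σ u) (σ v) = G.edist u v := by
  refine le_antisymm (Hom.edist_map_le σ.toHom u v) ?_
  simpa using Hom.edist_map_le σ.symm.toHom (σ u) (σ v)

lemma Iso.dist_map (σ : G ≃g G') (u v : V) : G'.dist (σ u) (σ v) = G.dist u v := by
  simp only [dist, σ.edist_map]

lemma Iso.eccent_map (σ : G ≃g G') (u : V) : G'.eccent (σ u) = G.eccent u := by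
  simp only [eccent, ← σ.edist_map u]
  exact (σ.toEquiv.iSup_comp (g := fun w => G'.edist (σ u) w)).symm

lemma Iso.radius_eq (σ : G ≃g G') : G'.radius = G.radius := by
  simp only [radius, ← σ.eccent_map]
  exact (σ.toEquiv.iInf_comp (g := G'.eccent)).symm

lemma Iso.map_mem_center_iff (σ : G ≃g G') {u : V} : σ u ∈ G'.center ↔ u ∈ G.center := by
  simp only [mem_center_iff, σ.eccent_map, σ.radius_eq]


lemma IsAcyclic.eq_of_isPath (hG : G.IsAcyclic) {u v : V} {p q : G.Walk u v}
    (hp : p.IsPath) (hq : q.IsPath) : p = q :=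
  congrArg Subtype.val ((hG.subsingleton_path u v).elim ⟨p, hp⟩ ⟨q, hq⟩)

lemma IsAcyclic.length_eq_dist_of_isPath (hG : G.IsAcyclic) {u v : V} {p : G.Walk u v}
    (hp : p.IsPath) : p.length = G.dist u v := by
  obtain ⟨q, hq, hql⟩ := p.reachable.exists_path_of_dist
  rw [hG.eq_of_isPath hp hq, hql]

lemma IsAcyclic.dist_add_dist_of_mem_support (hG : G.IsAcyclic) {u v w : V} {p : G.Walk u v}
    (hp : p.IsPath) (hw : w ∈ p.support) : G.dist u w + G.dist w v = G.dist u v := by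
  classical
  rw [← hG.length_eq_dist_of_isPath (hp.takeUntil hw),
    ← hG.length_eq_dist_of_isPath (hp.dropUntil hw), ← hG.length_eq_dist_of_isPath hp,
    ← Walk.length_append, p.take_spec hw]

lemma IsAcyclic.support_subset_of_isPath (hG : G.IsAcyclic) {u v : V} {p : G.Walk u v}
    (hp : p.IsPath) (q : G.Walk u v) : p.support ⊆ q.support := by
  classical
  rw [hG.eq_of_isPath hp q.bypass_isPath]
  exact q.support_bypass_subset_support

/-- If `u, v` are central but not adjacent, the neighbour `w` of `u` towards `v` is closer than
`u` or than `v` to every vertex, so its eccentricity would be below the radius. -/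
lemma IsTree.adj_of_mem_center [Finite V] (hG : G.IsTree) {u v : V} (hu : u ∈ G.center)
    (hv : v ∈ G.center) (hne : u ≠ v) : G.Adj u v := by
  by_contra hnadj
  obtain ⟨p, hp, -⟩ := hG.connected.exists_path_of_dist u v
  cases p with
  | nil => exact hne rfl
  | @cons _ w _ huw q =>
  have hwv : w ≠ v := by rintro rfl; exact hnadj huw
  have closer : ∀ y, G.dist w y < G.dist u y ∨ G.dist w y < G.dist v y := by
    intro y
    obtain ⟨a, ha, -⟩ := hG.connected.exists_path_of_dist u y
    obtain ⟨b, hb, -⟩ := hG.connected.exists_path_of_dist y v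
    have hw : w ∈ (Walk.cons huw q).support := by simp
    rcases (Walk.mem_support_append_iff a b).mp
      (hG.isAcyclic.support_subset_of_isPath hp (a.append b) hw) with hwa | hwb
    · have := hG.isAcyclic.dist_add_dist_of_mem_support ha hwa
      rw [dist_eq_one_iff_adj.mpr huw] at this
      omega
    · have := hG.isAcyclic.dist_add_dist_of_mem_support hb hwb
      have := hG.connected.pos_dist_of_ne hwv
      rw [dist_comm (u := w), dist_comm (u := v)]
      omega
  obtain ⟨y, hy⟩ := G.exists_edist_eq_eccent_of_finite w
  have hwy : G.radius ≤ G.dist w y := by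
    rw [(hG.connected w y).coe_dist_eq_edist, hy]
    exact radius_le_eccent
  have hecc : ∀ z ∈ G.center, (G.dist z y : ℕ∞) ≤ G.radius := fun z hz => by
    rw [(hG.connected z y).coe_dist_eq_edist, ← hz]
    exact edist_le_eccent
  rcases closer y with h | h
  · exact (hwy.trans_lt (by exact_mod_cast h)).not_ge (hecc u hu)
  · exact (hwy.trans_lt (by exact_mod_cast h)).not_ge (hecc v hv)

variable {α : Type*} {x u v : V}

lemma Connected.exists_adj_dist_add_one_eq (hG : G.Connected) (hv : v ≠ x) :
    ∃ u, G.Adj v u ∧ G.dist x u + 1 = G.dist x v := by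
  obtain ⟨p, hp⟩ := hG.exists_walk_length_eq_dist v x
  cases p with
  | nil => exact absurd rfl hv
  | @cons _ u _ hvu q =>
    refine ⟨u, hvu, le_antisymm ?_ ?_⟩
    · rw [dist_comm, dist_comm (u := x), ← hp, Walk.length_cons]
      exact Nat.succ_le_succ (dist_le q)
    · obtain ⟨r, hr⟩ := hG.exists_walk_length_eq_dist x u
      simpa [hr] using dist_le (r.concat hvu.symm)

open Classical in
/-- Junk value `v` when `v = x`. -/
def parent (G : SimpleGraph V) (x v : V) : V :=
  if h : ∃ u, G.Adj v u ∧ G.dist x u + 1 = G.dist x v then h.choose else v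

lemma Connected.parent_spec (hG : G.Connected) (hv : v ≠ x) :
    G.Adj v (G.parent x v) ∧ G.dist x (G.parent x v) + 1 = G.dist x v := by
  have h := hG.exists_adj_dist_add_one_eq hv
  rw [parent, dif_pos h]
  exact h.choose_spec

lemma IsTree.eq_penultimate_of_adj_of_dist_add_one_eq (hG : G.IsTree) {p : G.Walk x v}
    (hp : p.IsPath) (hvu : G.Adj v u) (hd : G.dist x u + 1 = G.dist x v) : u = p.penultimate := by
  classical
  obtain ⟨q, hq, hql⟩ := hG.connected.exists_path_of_dist x u
  have hvq : v ∉ q.support := fun hv => by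
    have := (dist_le (q.takeUntil v hv)).trans (q.length_takeUntil_le_length hv)
    omega
  exact hG.isAcyclic.eq_penultimate_of_adj_end hp hvu
    (hG.isAcyclic.mem_support_of_ne_mem_support_of_adj_of_isPath hp hq hvu hvq)

lemma IsTree.parent_eq (hG : G.IsTree) (hvu : G.Adj v u) (hd : G.dist x u + 1 = G.dist x v) :
    G.parent x v = u := by
  have hv : v ≠ x := by rintro rfl; simp at hd
  obtain ⟨p, hp, -⟩ := hG.connected.exists_path_of_dist x v
  obtain ⟨hadj, hdist⟩ := hG.connected.parent_spec hv
  rw [hG.eq_penultimate_of_adj_of_dist_add_one_eq hp hadj hdist,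
    hG.eq_penultimate_of_adj_of_dist_add_one_eq hp hvu hd]

lemma IsTree.parent_map (hG : G.IsTree) (σ : G ≃g G) (hσ : σ x = x) (hv : v ≠ x) :
    G.parent x (σ v) = σ (G.parent x v) := by
  obtain ⟨hadj, hdist⟩ := hG.connected.parent_spec hv
  have hσd : ∀ w, G.dist x (σ w) = G.dist x w := fun w => by
    simpa only [hσ] using σ.dist_map x w
  exact hG.parent_eq (σ.map_adj_iff.mpr hadj) (by rw [hσd, hσd, hdist])

variable [DecidableEq α]

def recolorAux (G : SimpleGraph V) (x : V) (c : V → α) : ℕ → V → Option α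
  | 0, _ => none
  | n + 1, v => if recolorAux G x c n (G.parent x v) = some (c v) then none else some (c v)

/-- The new colour is `none`; an old colour `a` becomes `some a`. -/
def recolor (G : SimpleGraph V) (x : V) (c : V → α) (v : V) : Option α :=
  recolorAux G x c (G.dist x v) v

lemma Connected.recolor_of_ne (hG : G.Connected) (c : V → α) (hv : v ≠ x) :
    G.recolor x c v =
      if G.recolor x c (G.parent x v) = some (c v) then none else some (c v) := by
  rw [recolor, ← (hG.parent_spec hv).2, recolorAux, recolor]

lemma Connected.recolor_ne_recolor_parent (hG : G.Connected) (c : V → α) (hv : v ≠ x) :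
    G.recolor x c v ≠ G.recolor x c (G.parent x v) := by
  rw [hG.recolor_of_ne c hv]
  split_ifs with h
  · rw [h]; exact (Option.some_ne_none _).symm
  · exact Ne.symm h

lemma Connected.recolor_or_recolor_parent (hG : G.Connected) (c : V → α) (hv : v ≠ x) :
    (G.recolor x c v).or (G.recolor x c (G.parent x v)) = some (c v) := by
  rw [hG.recolor_of_ne c hv]
  split_ifs with h
  · exact h
  · rfl

lemma IsTree.isProper_recolor (hG : G.IsTree) (x : V) (c : V → α) :
    IsProper G (G.recolor x c) := by
  intro a b hab
  rcases hG.dist_eq_dist_add_one_of_adj x hab with h | h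
  · have ha : a ≠ x := by rintro rfl; simp at h
    have := hG.connected.recolor_ne_recolor_parent c ha
    rwa [hG.parent_eq hab h.symm] at this
  · have hb : b ≠ x := by rintro rfl; simp at h
    have := hG.connected.recolor_ne_recolor_parent c hb
    rw [hG.parent_eq hab.symm h.symm] at this
    exact this.symm

lemma IsTree.distinguishesU_recolor [Finite V] (hG : G.IsTree) (hx : x ∈ G.center)
    {c : V → α} (hc : DistinguishesU G c) : DistinguishesU G (G.recolor x c) := by
  intro σ hσ
  have hσx : σ x = x := by
    by_contra hne
    have hadj := hG.adj_of_mem_center hx (σ.map_mem_center_iff.mpr hx) (Ne.symm hne)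
    exact hG.isProper_recolor x c x (σ x) hadj (hσ x).symm
  refine hc σ fun v => Option.some_injective _ ?_
  by_cases hv : v = x
  · rw [hv, hσx]
  · have hσv : σ v ≠ x := by rw [← hσx]; exact σ.injective.ne hv
    rw [← hG.connected.recolor_or_recolor_parent c hv,
      ← hG.connected.recolor_or_recolor_parent c hσv, hG.parent_map σ hσx hv, hσ, hσ]

end SimpleGraph

section

variable {V α β : Type*} {G : SimpleGraph V} {φ : V → α} {f : α → β}

lemma IsProper.comp_injective (hφ : IsProper G φ) (hf : f.Injective) : IsProper G (f ∘ φ) :=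
  fun a b hab => hf.ne (hφ a b hab)

lemma DistinguishesU.comp_injective (hφ : DistinguishesU G φ) (hf : f.Injective) :
    DistinguishesU G (f ∘ φ) :=
  fun σ hσ => hφ σ fun w => hf (hσ w)

lemma exists_distinguishesU_fin_DNumU [Finite V] (G : SimpleGraph V) :
    ∃ c : V → Fin (DNumU G), DistinguishesU G c := by
  have := Fintype.ofFinite V
  exact Nat.sInf_mem (s := {k | ∃ c : V → Fin k, DistinguishesU G c})
    ⟨_, Fintype.equivFin V, fun σ hσ w => (Fintype.equivFin V).injective (hσ w)⟩

end

theorem stmt18 {V : Type*} [Fintype V] (G : SimpleGraph V) (hG : G.IsTree) :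
    chiDU G ≤ DNumU G + 1 := by
  obtain ⟨c, hc⟩ := exists_distinguishesU_fin_DNumU G
  have : Nonempty V := hG.connected.nonempty
  obtain ⟨x, hx⟩ := G.center_nonempty
  have hinj := (finSuccEquiv (DNumU G)).symm.injective
  rw [chiDU]
  exact Nat.sInf_le ⟨_, (hG.isProper_recolor x c).comp_injective hinj,
    (hG.distinguishesU_recolor hx hc).comp_injective hinj⟩
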